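/- The Hessian in θ of Φ(p,θ) = D_JS(p, p(θ)) satisfies the matrix identity H_Φ(p,θ) = H_{p₁,…,p_k}(θ) + (1/2) I(θ) − (1/2) A(p,θ)ᵀ A(p,θ), where H_{p₁,…,p_k}(θ) has entries Σ_i φ'(p_i(θ)/p_i) ∂²p_i/∂θ_l∂θ_j, I(θ) is the Fisher information, A(p,θ) = Λ(p,θ)J(θ) with Λ(p,θ) = diag(1/√(p_i + p_i(θ))). -/

import Mathlib

open Real Finset

/-- The generating convex function of JSD as a φ-divergence. -/
noncomputable def phiJS (u : ℝ) : ℝ :=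
  (1/2) * u * Real.log u - (1/2) * (u + 1) * Real.log ((u + 1) / 2)

/-- φ'(u) = (1/2) ln(u/((u+1)/2)). -/
noncomputable def phiJS' (u : ℝ) : ℝ :=
  (1/2) * Real.log (u / ((u + 1) / 2))

/-!
Since `x φ(c/x) = c φ(x/c)`, one has `Φ(p, θ) = Σ_i p_i φ(p_i(θ)/p_i)`, so the gradient is
`Σ_i φ'(p_i(θ)/p_i) ∇p_i(θ)`. Differentiating once more, the product rule gives the first term
of the identity, and `φ''(u) = 1/(2u) - 1/(2(u+1))` at `u = p_i(θ)/p_i`, rescaled by `1/p_i`,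
becomes `1/(2 p_i(θ)) - 1/(2 (p_i + p_i(θ)))`: the Fisher information and the `-½ AᵀA` term.
-/

theorem mul_phiJS_div_comm {x c : ℝ} (hx : 0 < x) (hc : 0 < c) :
    x * phiJS (c / x) = c * phiJS (x / c) := by
  have hcx : (c / x + 1) / 2 = (c + x) / (2 * x) := by field_simp
  have hxc : (x / c + 1) / 2 = (c + x) / (2 * c) := by field_simp; ring
  rw [phiJS, phiJS, hcx, hxc, log_div hc.ne' hx.ne', log_div hx.ne' hc.ne',
    log_div (by positivity) (by positivity), log_div (by positivity) (by positivity),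
    log_mul two_ne_zero hx.ne', log_mul two_ne_zero hc.ne']
  field_simp
  ring

theorem hasDerivAt_phiJS {u : ℝ} (hu : 0 < u) : HasDerivAt phiJS (phiJS' u) u := by
  have hv : 0 < (u + 1) / 2 := by positivity
  have h := ((((hasDerivAt_id' u).fun_mul (hasDerivAt_log hu.ne')).const_mul (1 / 2)).fun_sub
    ((((hasDerivAt_id' u).add_const 1).fun_mul ((hasDerivAt_log hv.ne').comp u
      (((hasDerivAt_id' u).add_const 1).div_const 2))).const_mul (1 / 2)))
  refine (h.congr_of_eventuallyEq (.of_forall fun x => ?_)).congr_deriv ?_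
  · simp only [phiJS, Function.comp_apply]; ring
  · rw [phiJS', log_div hu.ne' hv.ne', Function.comp_apply]; field_simp; ring

theorem hasDerivAt_phiJS' {u : ℝ} (hu : 0 < u) :
    HasDerivAt phiJS' (1 / (2 * u) - 1 / (2 * (u + 1))) u := by
  have h := (((hasDerivAt_log hu.ne').fun_sub (((hasDerivAt_id' u).add_const 1).log
    (by positivity))).add_const (log 2)).const_mul (1 / 2 : ℝ)
  refine (h.congr_of_eventuallyEq ?_).congr_deriv (by field_simp)
  filter_upwards [Ioi_mem_nhds hu] with x (hx : 0 < x)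
  rw [phiJS', div_div_eq_mul_div, log_div (by positivity) (by positivity),
    log_mul hx.ne' two_ne_zero]
  ring

theorem hasDerivAt_const_mul_phiJS_div {c x : ℝ} (hc : 0 < c) (hx : 0 < x) :
    HasDerivAt (fun y => c * phiJS (y / c)) (phiJS' (x / c)) x := by
  refine (((hasDerivAt_phiJS (div_pos hx hc)).comp x
    ((hasDerivAt_id' x).div_const c)).const_mul c).congr_deriv ?_
  field_simp

theorem hasDerivAt_phiJS'_div {c x : ℝ} (hc : 0 < c) (hx : 0 < x) :
    HasDerivAt (fun y => phiJS' (y / c)) (1 / (2 * x) - 1 / (2 * (c + x))) x := by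
  refine ((hasDerivAt_phiJS' (div_pos hx hc)).comp x
    ((hasDerivAt_id' x).div_const c)).congr_deriv ?_
  field_simp
  ring

section

variable {E ι : Type*} [NormedAddCommGroup E] [NormedSpace ℝ E] [Fintype ι]
  {c : ι → ℝ} {f : E → ι → ℝ} {x : E}

theorem fderiv_sum_mul_phiJS_div_apply (hc : ∀ i, 0 < c i) (hf : ∀ i, 0 < f x i)
    (hd : ∀ i, DifferentiableAt ℝ (fun y => f y i) x) (v : E) :
    fderiv ℝ (fun y => ∑ i, c i * phiJS (f y i / c i)) x v =
      ∑ i, phiJS' (f x i / c i) * fderiv ℝ (fun y => f y i) x v := by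
  have h : HasFDerivAt (fun y => ∑ i, c i * phiJS (f y i / c i))
      (∑ i, phiJS' (f x i / c i) • fderiv ℝ (fun y => f y i) x) x :=
    .fun_sum fun i _ => ((hasDerivAt_const_mul_phiJS_div (hc i) (hf i)).comp_hasFDerivAt x
      (hd i).hasFDerivAt :)
  simp [h.fderiv]

theorem fderiv_sum_phiJS'_div_mul_apply (hc : ∀ i, 0 < c i) (hf : ∀ i, 0 < f x i)
    (hd : ∀ i, DifferentiableAt ℝ (fun y => f y i) x) {g : ι → E → ℝ}
    (hg : ∀ i, DifferentiableAt ℝ (g i) x) (v : E) :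
    fderiv ℝ (fun y => ∑ i, phiJS' (f y i / c i) * g i y) x v =
      ∑ i, (phiJS' (f x i / c i) * fderiv ℝ (g i) x v +
        (1 / (2 * f x i) - 1 / (2 * (c i + f x i))) * fderiv ℝ (fun y => f y i) x v *
          g i x) := by
  have h : HasFDerivAt (fun y => ∑ i, phiJS' (f y i / c i) * g i y)
      (∑ i, (phiJS' (f x i / c i) • fderiv ℝ (g i) x +
        g i x • (1 / (2 * f x i) - 1 / (2 * (c i + f x i))) • fderiv ℝ (fun y => f y i) x)) x :=
    .fun_sum fun i _ => (((hasDerivAt_phiJS'_div (hc i) (hf i)).comp_hasFDerivAt x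
      (hd i).hasFDerivAt).mul (hg i).hasFDerivAt :)
  simp only [h.fderiv, _root_.sum_apply, add_apply, smul_apply, smul_eq_mul]
  refine sum_congr rfl fun i _ => ?_
  ring

theorem fderiv_fderiv_sum_mul_phiJS_div_apply (hc : ∀ i, 0 < c i) (hf : ∀ y i, 0 < f y i)
    (hf2 : ∀ i, ContDiff ℝ 2 (fun y => f y i)) (v w : E) :
    fderiv ℝ (fun y => fderiv ℝ (fun y' => ∑ i, c i * phiJS (f y' i / c i)) y w) x v =
      (∑ i, phiJS' (f x i / c i) * fderiv ℝ (fun y => fderiv ℝ (fun y' => f y' i) y w) x v)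
        + (1 / 2) *
            (∑ i, fderiv ℝ (fun y => f y i) x v * fderiv ℝ (fun y => f y i) x w / f x i)
        - (1 / 2) * (∑ i, fderiv ℝ (fun y => f y i) x v * fderiv ℝ (fun y => f y i) x w /
            (c i + f x i)) := by
  have hd : ∀ i y, DifferentiableAt ℝ (fun y => f y i) y := fun i y =>
    ((hf2 i).differentiable (by norm_num)).differentiableAt
  have hd2 : ∀ i, DifferentiableAt ℝ (fun y => fderiv ℝ (fun y' => f y' i) y w) x := fun i =>
    ((((hf2 i).fderiv_right (m := 1) (by norm_num)).clm_apply contDiff_const).differentiable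
      one_ne_zero).differentiableAt
  have hgrad : (fun y => fderiv ℝ (fun y' => ∑ i, c i * phiJS (f y' i / c i)) y w) =
      fun y => ∑ i, phiJS' (f y i / c i) * fderiv ℝ (fun y' => f y' i) y w :=
    funext fun y => fderiv_sum_mul_phiJS_div_apply hc (hf y) (hd · y) w
  rw [hgrad, fderiv_sum_phiJS'_div_mul_apply hc (hf x) (hd · x) hd2, sum_add_distrib, mul_sum,
    mul_sum, add_sub_assoc, ← sum_sub_distrib]
  congr 1
  refine sum_congr rfl fun i _ => ?_
  field_simp

end

theorem jsDiv_hessian_identity_general {d k : ℕ}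
    (p : Fin k → ℝ) (hp : ∀ i, 0 < p i)
    (pθ : (Fin d → ℝ) → Fin k → ℝ) (θ0 : Fin d → ℝ)
    (hsmooth : ∀ i, ContDiff ℝ 2 (fun t => pθ t i))
    (hpos : ∀ t i, 0 < pθ t i)
    (l j : Fin d) :
    fderiv ℝ
        (fun t => fderiv ℝ (fun t' => ∑ i, pθ t' i * phiJS (p i / pθ t' i)) t
          (Pi.single j 1)) θ0 (Pi.single l 1) =
      (∑ i, phiJS' (pθ θ0 i / p i) *
          fderiv ℝ (fun t => fderiv ℝ (fun t' => pθ t' i) t (Pi.single j 1)) θ0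
            (Pi.single l 1))
        + (1/2) * (∑ i, fderiv ℝ (fun t => pθ t i) θ0 (Pi.single l 1) *
              fderiv ℝ (fun t => pθ t i) θ0 (Pi.single j 1) / pθ θ0 i)
        - (1/2) * (∑ i, fderiv ℝ (fun t => pθ t i) θ0 (Pi.single l 1) *
              fderiv ℝ (fun t => pθ t i) θ0 (Pi.single j 1) / (p i + pθ θ0 i)) := by
  have hsymm : (fun t => ∑ i, pθ t i * phiJS (p i / pθ t i)) =
      fun t => ∑ i, p i * phiJS (pθ t i / p i) :=
    funext fun t => sum_congr rfl fun i _ => mul_phiJS_div_comm (hpos t i) (hp i)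
  rw [hsymm]
  exact fderiv_fderiv_sum_mul_phiJS_div_apply hp hpos hsmooth _ _

/-- Hessian identity for Φ(p,θ) = Σ_i p_i(θ) φ(p_i/p_i(θ)):
H_Φ(p,θ)_{lj} = Σ_i φ'(p_i(θ)/p_i) ∂²_{lj} p_i(θ) + (1/2) I_{lj}(θ) − (1/2)[A(p,θ)ᵀA(p,θ)]_{lj}. -/
theorem jsDiv_hessian_identity {d k : ℕ}
    (p : Fin k → ℝ) (hp : ∀ i, 0 < p i) (hpsum : ∑ i, p i = 1)
    (pθ : (Fin d → ℝ) → Fin k → ℝ) (θ0 : Fin d → ℝ)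
    (hsmooth : ∀ i, ContDiff ℝ 2 (fun t => pθ t i))
    (hpos : ∀ t i, 0 < pθ t i) (hθsum : ∀ t, ∑ i, pθ t i = 1)
    (l j : Fin d) :
    fderiv ℝ
        (fun t => fderiv ℝ (fun t' => ∑ i, pθ t' i * phiJS (p i / pθ t' i)) t
          (Pi.single j 1)) θ0 (Pi.single l 1) =
      (∑ i, phiJS' (pθ θ0 i / p i) *
          fderiv ℝ (fun t => fderiv ℝ (fun t' => pθ t' i) t (Pi.single j 1)) θ0
            (Pi.single l 1))
        + (1/2) * (∑ i, fderiv ℝ (fun t => pθ t i) θ0 (Pi.single l 1) *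
              fderiv ℝ (fun t => pθ t i) θ0 (Pi.single j 1) / pθ θ0 i)
        - (1/2) * (∑ i, fderiv ℝ (fun t => pθ t i) θ0 (Pi.single l 1) *
              fderiv ℝ (fun t => pθ t i) θ0 (Pi.single j 1) / (p i + pθ θ0 i)) :=
  jsDiv_hessian_identity_general p hp pθ θ0 hsmooth hpos l j
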